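/- Let Z₀ ~ Bin(ρ·nq, p_f) with ρ ≥ 1, n ≥ 2, q ≥ 1 integers and p_f ∈ (0,1). If p_f·R_f ≥ (C_lc + C_fs + C_tx)/((1 - logκ/√n)·nq) with logκ/√n < 1, then the event {Z₀ ≥ (1 - logκ/√n)·ρ·nq·p_f} implies Z₀·R_f ≥ C_lc + ρ·C_fs + ρ·C_tx, and by the Chernoff bound the complementary event has probability at most exp(-(log²κ/(2n))·ρ·nq·p_f). -/

import Mathlib

/-!
The first claim is arithmetic: the hypothesis on `p_f * R_f` says that `(1 - δ) n q p_f` fruits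
pay for `C_lc + C_fs + C_tx`, and over `ρ ≥ 1` rounds only the fruit-set and transaction costs
scale with `ρ`. The second is the multiplicative Chernoff lower tail for `X ~ Bin(m, p)`,
`δ = log κ / √n`: by the exponential Markov inequality with `e^{-t} = 1 - δ`,
`P(X < (1 - δ) m p) ≤ e^{t (1 - δ) m p} (1 - p δ)^m ≤ exp((t (1 - δ) - δ) m p)`, and
`t (1 - δ) ≤ δ - δ² / 2` because `sinh y ≤ y` for `y = log (1 - δ) ≤ 0`.
-/

open Real
open scoped ENNReal NNReal

set_option linter.deprecated false

lemma sq_sub_one_div_two_le_mul_log {x : ℝ} (hx0 : 0 < x) (hx1 : x ≤ 1) :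
    (x ^ 2 - 1) / 2 ≤ x * log x := by
  have h : (x - x⁻¹) / 2 ≤ log x := by
    rw [← sinh_log hx0]
    exact sinh_le_self_iff.mpr (log_nonpos hx0.le hx1)
  calc (x ^ 2 - 1) / 2 = x * ((x - x⁻¹) / 2) := by field_simp
    _ ≤ x * log x := mul_le_mul_of_nonneg_left h hx0.le

lemma exp_mul_one_sub_pow_le {δ p : ℝ} (m : ℕ) (hδ0 : 0 ≤ δ) (hδ1 : δ < 1) (hp0 : 0 ≤ p)
    (hp1 : p ≤ 1) :
    exp (-log (1 - δ) * ((1 - δ) * (m * p))) * (1 - p * δ) ^ m ≤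
      exp (-(δ ^ 2 / 2) * (m * p)) := by
  have hpow : (1 - p * δ) ^ m ≤ exp (-(p * δ)) ^ m :=
    pow_le_pow_left₀ (by nlinarith) (by linarith [add_one_le_exp (-(p * δ))]) m
  have hlog : -log (1 - δ) * (1 - δ) ≤ δ - δ ^ 2 / 2 := by
    nlinarith [sq_sub_one_div_two_le_mul_log (x := 1 - δ) (by linarith) (by linarith)]
  have hmp : (0 : ℝ) ≤ m * p := by positivity
  calc exp (-log (1 - δ) * ((1 - δ) * (m * p))) * (1 - p * δ) ^ m
      ≤ exp (-log (1 - δ) * ((1 - δ) * (m * p))) * exp (-(p * δ)) ^ m := by gcongr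
    _ = exp (-log (1 - δ) * (1 - δ) * (m * p) - δ * (m * p)) := by
      rw [← exp_nat_mul, ← exp_add]; ring_nf
    _ ≤ exp (-(δ ^ 2 / 2) * (m * p)) := by
      gcongr; nlinarith

lemma PMF.toOuterMeasure_le_tsum_mul {α : Type*} (P : PMF α) {s : Set α} {w : α → ℝ≥0∞}
    (hw : ∀ x ∈ s, 1 ≤ w x) : P.toOuterMeasure s ≤ ∑' x, P x * w x := by
  rw [PMF.toOuterMeasure_apply]
  refine ENNReal.tsum_le_tsum fun x => ?_
  by_cases hx : x ∈ s
  · rw [Set.indicator_of_mem hx]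
    exact le_mul_of_one_le_right' (hw x hx)
  · rw [Set.indicator_of_notMem hx]
    exact zero_le

lemma PMF.sum_binomial_mul_pow (p : ℝ≥0) (hp : p ≤ 1) (m : ℕ) (x : ℝ≥0∞) :
    ∑ k : Fin (m + 1), PMF.binomial p hp m k * x ^ (k : ℕ) = (p * x + (1 - p)) ^ m := by
  rw [add_pow, ← Fin.sum_univ_eq_sum_range]
  refine Finset.sum_congr rfl fun k _ => ?_
  rw [PMF.binomial_apply, Fin.val_last]
  ring

theorem PMF.binomial_toOuterMeasure_lt_le_exp (p : ℝ≥0) (hp : p ≤ 1) (m : ℕ) {δ : ℝ}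
    (hδ0 : 0 ≤ δ) (hδ1 : δ < 1) :
    (PMF.binomial p hp m).toOuterMeasure {k | ((k : ℕ) : ℝ) < (1 - δ) * (m * p)} ≤
      ENNReal.ofReal (exp (-(δ ^ 2 / 2) * (m * p))) := by
  have hp' : (p : ℝ) ≤ 1 := hp
  set t := -log (1 - δ)
  set a := (1 - δ) * (m * p)
  have ht : 0 ≤ t := neg_nonneg.mpr (log_nonpos (by linarith) (by linarith))
  have hexp : exp (-t) = 1 - δ := by rw [neg_neg, exp_log (by linarith)]
  have hweight : ∀ k ∈ {k : Fin (m + 1) | ((k : ℕ) : ℝ) < a},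
      1 ≤ ENNReal.ofReal (exp (t * a)) * ENNReal.ofReal (exp (-t)) ^ (k : ℕ) := by
    intro k hk
    rw [← ENNReal.ofReal_pow (exp_pos _).le, ← ENNReal.ofReal_mul (exp_pos _).le, ← exp_nat_mul,
      ← exp_add, ENNReal.one_le_ofReal, one_le_exp_iff]
    linarith [mul_nonneg ht (sub_nonneg.mpr (le_of_lt hk.out))]
  have hmgf : (p : ℝ≥0∞) * ENNReal.ofReal (exp (-t)) + (1 - p) = ENNReal.ofReal (1 - p * δ) := by
    rw [hexp, ← ENNReal.ofReal_coe_nnreal, ← ENNReal.ofReal_one,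
      ← ENNReal.ofReal_sub _ p.coe_nonneg, ← ENNReal.ofReal_mul p.coe_nonneg,
      ← ENNReal.ofReal_add (by nlinarith) (by linarith)]
    ring_nf
  calc (PMF.binomial p hp m).toOuterMeasure {k | ((k : ℕ) : ℝ) < a}
      ≤ ∑' k, PMF.binomial p hp m k *
          (ENNReal.ofReal (exp (t * a)) * ENNReal.ofReal (exp (-t)) ^ (k : ℕ)) :=
        PMF.toOuterMeasure_le_tsum_mul _ hweight
    _ = ENNReal.ofReal (exp (t * a)) * (p * ENNReal.ofReal (exp (-t)) + (1 - p)) ^ m := by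
        rw [tsum_fintype, ← PMF.sum_binomial_mul_pow p hp, Finset.mul_sum]
        exact Finset.sum_congr rfl fun k _ => mul_left_comm _ _ _
    _ = ENNReal.ofReal (exp (t * a) * (1 - p * δ) ^ m) := by
        rw [hmgf, ← ENNReal.ofReal_pow (by nlinarith [p.coe_nonneg]),
          ← ENNReal.ofReal_mul (exp_pos _).le]
    _ ≤ ENNReal.ofReal (exp (-(δ ^ 2 / 2) * (m * p))) :=
        ENNReal.ofReal_le_ofReal (exp_mul_one_sub_pow_le m hδ0 hδ1 p.coe_nonneg hp')

lemma cost_le_reward {ρ B p R c_lc c_fs c_tx Z : ℝ} (hρ : 1 ≤ ρ) (hc : 0 ≤ c_lc) (hR : 0 ≤ R)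
    (hB : 0 < B) (hreward : (c_lc + c_fs + c_tx) / B ≤ p * R) (hZ : ρ * (B * p) ≤ Z) :
    c_lc + ρ * c_fs + ρ * c_tx ≤ Z * R := by
  have hcost : c_lc + c_fs + c_tx ≤ B * (p * R) := (div_le_iff₀' hB).mp hreward
  calc c_lc + ρ * c_fs + ρ * c_tx ≤ ρ * (c_lc + c_fs + c_tx) := by nlinarith
    _ ≤ ρ * (B * (p * R)) := by gcongr
    _ = ρ * (B * p) * R := by ring
    _ ≤ Z * R := by gcongr

theorem stmt_4_general (ρ n q : ℕ) (hρ : 1 ≤ ρ) (hn : 2 ≤ n) (hq : 1 ≤ q)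
    (p_f R_f C_lc C_fs C_tx κ : ℝ) (hpf0 : 0 < p_f) (hpf1 : p_f < 1)
    (hR : 0 < R_f) (hClc : 0 < C_lc)
    (hκ0 : 0 ≤ Real.log κ) (hκ : Real.log κ / Real.sqrt n < 1)
    (hreward : (C_lc + C_fs + C_tx) / ((1 - Real.log κ / Real.sqrt n) * ((n : ℝ) * q))
        ≤ p_f * R_f) :
    (∀ Z₀ : ℝ,
        (1 - Real.log κ / Real.sqrt n) * ((ρ : ℝ) * n * q) * p_f ≤ Z₀ →
          C_lc + (ρ : ℝ) * C_fs + (ρ : ℝ) * C_tx ≤ Z₀ * R_f) ∧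
      (PMF.binomial (Real.toNNReal p_f) (Real.toNNReal_le_one.mpr hpf1.le)
            (ρ * n * q)).toOuterMeasure
          {k | ((k : ℕ) : ℝ) < (1 - Real.log κ / Real.sqrt n) * ((ρ : ℝ) * n * q) * p_f} ≤
        ENNReal.ofReal
          (Real.exp (-((Real.log κ) ^ 2 / (2 * n)) * ((ρ : ℝ) * n * q) * p_f)) := by
  have hn0 : (0 : ℝ) < n := by exact_mod_cast (by omega : 0 < n)
  have hq0 : (0 : ℝ) < q := by exact_mod_cast hq
  have hδ0 : 0 ≤ log κ / √n := by positivity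
  have hδsq : (log κ / √n) ^ 2 = log κ ^ 2 / n := by rw [div_pow, sq_sqrt hn0.le]
  refine ⟨fun Z₀ hZ => cost_le_reward (by exact_mod_cast hρ) hClc.le hR.le
    (mul_pos (by linarith) (mul_pos hn0 hq0)) hreward (by linarith), ?_⟩
  convert PMF.binomial_toOuterMeasure_lt_le_exp _ _ (ρ * n * q) hδ0 hκ using 3
  · simp only [Real.coe_toNNReal _ hpf0.le, Nat.cast_mul, mul_assoc]
  · rw [Real.coe_toNNReal _ hpf0.le, hδsq]
    push_cast
    ring

theorem stmt_4 (ρ n q : ℕ) (hρ : 1 ≤ ρ) (hn : 2 ≤ n) (hq : 1 ≤ q)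
    (p_f R_f C_lc C_fs C_tx κ : ℝ) (hpf0 : 0 < p_f) (hpf1 : p_f < 1)
    (hR : 0 < R_f) (hClc : 0 < C_lc) (hCfs : 0 < C_fs) (hCtx : 0 < C_tx)
    (hκ0 : 0 ≤ Real.log κ) (hκ : Real.log κ / Real.sqrt n < 1)
    (hreward : (C_lc + C_fs + C_tx) / ((1 - Real.log κ / Real.sqrt n) * ((n : ℝ) * q))
        ≤ p_f * R_f) :
    (∀ Z₀ : ℝ,
        (1 - Real.log κ / Real.sqrt n) * ((ρ : ℝ) * n * q) * p_f ≤ Z₀ →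
          C_lc + (ρ : ℝ) * C_fs + (ρ : ℝ) * C_tx ≤ Z₀ * R_f) ∧
      (PMF.binomial (Real.toNNReal p_f) (Real.toNNReal_le_one.mpr hpf1.le)
            (ρ * n * q)).toOuterMeasure
          {k | ((k : ℕ) : ℝ) < (1 - Real.log κ / Real.sqrt n) * ((ρ : ℝ) * n * q) * p_f} ≤
        ENNReal.ofReal
          (Real.exp (-((Real.log κ) ^ 2 / (2 * n)) * ((ρ : ℝ) * n * q) * p_f)) :=
  stmt_4_general ρ n q hρ hn hq p_f R_f C_lc C_fs C_tx κ hpf0 hpf1 hR hClc hκ0 hκ hreward
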